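/- Let L and K generate contractive C₀-semigroups on X, Y ⊆ X a Banach space such that the closure of (L+K, Y) generates a C₀-semigroup on X, and assume there exists a contractive, strongly continuous family F(t) ∈ B(X) with ‖F(t) − e^{t(L+K)}‖_{Y→X} ≤ b t^{m+1} for all t ≥ 0. If Y is (L+K)-stable with ‖e^{t(L+K)}‖_{Y→Y} ≤ c̃ e^{tω}, then for all x ∈ Y, t ≥ 0, n ∈ ℕ: ‖(F(t/n))^n x − e^{t(L+K)} x‖_X ≤ (t^{m+1}/n^m) c̃ b e^{tω} ‖x‖_Y. -/
import Mathlib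


open Set

variable {X : Type*} [NormedAddCommGroup X] [NormedSpace ℝ X] [CompleteSpace X]

/-- A `C₀`-semigroup on `X`. -/
def IsC0Semigroup (S : ℝ → X →L[ℝ] X) : Prop :=
  S 0 = 1 ∧ (∀ t s, 0 ≤ t → 0 ≤ s → S (t + s) = S t ∘L S s) ∧
    ∀ x : X, ContinuousOn (fun t => S t x) (Ici (0:ℝ))

/-- A contractive `C₀`-semigroup on `X`. -/
def IsContractionSemigroup (S : ℝ → X →L[ℝ] X) : Prop :=
  IsC0Semigroup S ∧ ∀ t, 0 ≤ t → ‖S t‖ ≤ 1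

def GeneratesOn (S : ℝ → X →L[ℝ] X) (A : X →ₗ[ℝ] X) (D : Set X) : Prop :=
  ∀ x ∈ D, ∀ t ∈ Ici (0:ℝ), HasDerivWithinAt (fun r => S r x) (S t (A x)) (Ici (0:ℝ)) t

/-- general Suzuki scheme, Lemma 4.3: if the single-step approximation
satisfies `‖F(t) − e^{t(L+K)}‖_{Y→X} ≤ b t^{m+1}` and `Y` is `(L+K)`-stable, then
`‖F(t/n)^n x − e^{t(L+K)}x‖ ≤ (t^{m+1}/n^m) c̃ b e^{ωt} ‖x‖_Y` for all `x ∈ Y`, `t ≥ 0`, `n ∈ ℕ`. -/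
theorem stmt4 {Y : Type*} [NormedAddCommGroup Y] [NormedSpace ℝ Y] [CompleteSpace Y]
    (ι : Y →L[ℝ] X) (hι : Function.Injective ι)
    (L K : X →ₗ[ℝ] X) (SL SK S : ℝ → X →L[ℝ] X)
    (hSL : IsContractionSemigroup SL) (hSK : IsContractionSemigroup SK)
    (hS : IsC0Semigroup S)
    (hgenL : GeneratesOn SL L (range ι)) (hgenK : GeneratesOn SK K (range ι))
    (hgenS : GeneratesOn S (L + K) (range ι))
    (m : ℕ) (hm : 1 ≤ m)
    (F : ℝ → X →L[ℝ] X)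
    (hFcontr : ∀ t, 0 ≤ t → ‖F t‖ ≤ 1)
    (hFcont : ∀ x : X, ContinuousOn (fun t => F t x) (Ici (0:ℝ)))
    (b : ℝ) (hb : 0 ≤ b)
    (hFapprox : ∀ t, 0 ≤ t → ∀ y : Y, ‖F t (ι y) - S t (ι y)‖ ≤ b * t ^ (m + 1) * ‖y‖)
    (SY : ℝ → Y →L[ℝ] Y) (ctil ω : ℝ) (hctil : 0 ≤ ctil) (hω : 0 ≤ ω)
    (hcompat : ∀ t, 0 ≤ t → ∀ y : Y, ι (SY t y) = S t (ι y))
    (hstab : ∀ t, 0 ≤ t → ‖SY t‖ ≤ ctil * Real.exp (ω * t)) :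
    ∀ (y : Y) (t : ℝ) (n : ℕ), 0 ≤ t → 1 ≤ n →
      ‖((F (t / n)) ^ n) (ι y) - S t (ι y)‖ ≤
        (t ^ (m + 1) / n ^ m) * ctil * b * Real.exp (ω * t) * ‖y‖ := by
  intro y t n ht hn
  have hn0 : (0:ℝ) < n := by exact_mod_cast Nat.lt_of_lt_of_le Nat.zero_lt_one hn
  set τ : ℝ := t / n with hτdef
  have hτ : 0 ≤ τ := div_nonneg ht hn0.le
  -- key single-step bound, uniform in k ≤ n
  have hstep : ∀ k : ℕ, k ≤ n → ‖F τ (S (k * τ) (ι y)) - S τ (S (k * τ) (ι y))‖ ≤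
      b * τ ^ (m + 1) * (ctil * Real.exp (ω * t)) * ‖y‖ := by
    intro k hk
    have hkτ : 0 ≤ (k : ℝ) * τ := mul_nonneg (Nat.cast_nonneg k) hτ
    have hc := hcompat ((k : ℝ) * τ) hkτ y
    rw [← hc]
    calc ‖F τ (ι (SY (k * τ) y)) - S τ (ι (SY (k * τ) y))‖
        ≤ b * τ ^ (m + 1) * ‖SY (k * τ) y‖ := hFapprox τ hτ _
      _ ≤ b * τ ^ (m + 1) * (ctil * Real.exp (ω * ((k:ℝ) * τ)) * ‖y‖) := by
          apply mul_le_mul_of_nonneg_left _ (by positivity)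
          calc ‖SY (k * τ) y‖ ≤ ‖SY (k * τ)‖ * ‖y‖ := (SY _).le_opNorm y
            _ ≤ ctil * Real.exp (ω * ((k:ℝ) * τ)) * ‖y‖ :=
              mul_le_mul_of_nonneg_right (hstab _ hkτ) (norm_nonneg y)
      _ ≤ b * τ ^ (m + 1) * (ctil * Real.exp (ω * t) * ‖y‖) := by
          apply mul_le_mul_of_nonneg_left _ (by positivity)
          apply mul_le_mul_of_nonneg_right _ (norm_nonneg y)
          apply mul_le_mul_of_nonneg_left _ hctil
          apply Real.exp_le_exp.2
          apply mul_le_mul_of_nonneg_left _ hω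
          have : (k : ℝ) * τ ≤ n * τ := by
            apply mul_le_mul_of_nonneg_right _ hτ
            exact_mod_cast hk
          rwa [hτdef, mul_div_cancel₀ t hn0.ne'] at this
      _ = b * τ ^ (m + 1) * (ctil * Real.exp (ω * t)) * ‖y‖ := by ring
  -- induction: ‖F τ ^ k x - S (k τ) x‖ ≤ k * step bound
  have hmain : ∀ k : ℕ, k ≤ n → ‖((F τ) ^ k) (ι y) - S ((k:ℝ) * τ) (ι y)‖ ≤
      k * (b * τ ^ (m + 1) * (ctil * Real.exp (ω * t)) * ‖y‖) := by
    intro k hk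
    induction k with
    | zero => simp [hS.1]
    | succ k ih =>
      have hk' : k ≤ n := Nat.le_of_succ_le hk
      have ih' := ih hk'
      have hkτ : 0 ≤ (k : ℝ) * τ := mul_nonneg (Nat.cast_nonneg k) hτ
      have hSsplit : S (((k:ℕ)+1 : ℕ) * τ) = S τ ∘L S ((k:ℝ) * τ) := by
        rw [show (((k:ℕ)+1 : ℕ) : ℝ) * τ = τ + (k:ℝ) * τ by push_cast; ring]
        exact hS.2.1 τ ((k:ℝ)*τ) hτ hkτ
      have hpow : ((F τ) ^ (k+1)) (ι y) = F τ (((F τ) ^ k) (ι y)) := by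
        rw [pow_succ']; rfl
      have heq : ((F τ) ^ (k+1)) (ι y) - S (((k:ℕ)+1 : ℕ) * τ) (ι y)
          = F τ (((F τ) ^ k) (ι y) - S ((k:ℝ) * τ) (ι y))
            + (F τ (S ((k:ℝ) * τ) (ι y)) - S τ (S ((k:ℝ) * τ) (ι y))) := by
        rw [hpow, hSsplit]
        simp [map_sub]
      calc ‖((F τ) ^ (k+1)) (ι y) - S (((k:ℕ)+1 : ℕ) * τ) (ι y)‖
          ≤ ‖F τ (((F τ) ^ k) (ι y) - S ((k:ℝ) * τ) (ι y))‖
            + ‖F τ (S ((k:ℝ) * τ) (ι y)) - S τ (S ((k:ℝ) * τ) (ι y))‖ := by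
            rw [heq]; exact norm_add_le _ _
        _ ≤ k * (b * τ ^ (m + 1) * (ctil * Real.exp (ω * t)) * ‖y‖)
            + b * τ ^ (m + 1) * (ctil * Real.exp (ω * t)) * ‖y‖ := by
            apply add_le_add _ (hstep k hk')
            calc ‖F τ (((F τ) ^ k) (ι y) - S ((k:ℝ) * τ) (ι y))‖
                ≤ ‖F τ‖ * ‖((F τ) ^ k) (ι y) - S ((k:ℝ) * τ) (ι y)‖ := (F τ).le_opNorm _
              _ ≤ 1 * ‖((F τ) ^ k) (ι y) - S ((k:ℝ) * τ) (ι y)‖ :=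
                  mul_le_mul_of_nonneg_right (hFcontr τ hτ) (norm_nonneg _)
              _ ≤ k * (b * τ ^ (m + 1) * (ctil * Real.exp (ω * t)) * ‖y‖) := by
                  rw [one_mul]; exact ih'
        _ = ((k:ℕ)+1 : ℕ) * (b * τ ^ (m + 1) * (ctil * Real.exp (ω * t)) * ‖y‖) := by
            push_cast; ring
  have := hmain n le_rfl
  rw [show (n:ℝ) * τ = t by rw [hτdef]; field_simp] at this
  calc ‖((F τ) ^ n) (ι y) - S t (ι y)‖
      ≤ n * (b * τ ^ (m + 1) * (ctil * Real.exp (ω * t)) * ‖y‖) := this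
    _ = (t ^ (m + 1) / n ^ m) * ctil * b * Real.exp (ω * t) * ‖y‖ := by
        rw [hτdef, div_pow]
        field_simp
        ring
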